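/- arXiv:2503.11501 — 4 statements merged into one kernel-verified Lean document; each statement's English description precedes it below -/
import Mathlib

section
/- Let μ be an entire, finite, nondegenerate, nonlocalized and irreducible K-type projection, and let θ ∈ ℝ^K be such that μ_θ is critical with asymptotic direction X_θ (the normalized left 1-eigenvector of M_θ with positive coordinates). Then θ is the unique global maximizer of the function f_{X_θ}(·) = −X_θ^⊺ χ(·) on ℝ^K. -/
/-!
Write `Z = t - θ`. Jensen's inequality for `exp` under the tilted law `μ_θ^(i)`, whose mean of
`k ↦ Z·k` is `(M_θ Z)ᵢ`, gives `log φ^(i)(e^t) ≥ log φ^(i)(e^θ) + (M_θ Z)ᵢ`, strictly when `Z·k`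
is not `μ^(i)`-a.s. constant. Averaging against the left eigenvector `X` turns `Σ Xᵢ (M_θ Z)ᵢ`
into `X·Z`, which is exactly the change of the linear part of `f_X`; nonlocalization provides a
type where the inequality is strict.
-/

open scoped BigOperators

/-- Spectral radius of a real square matrix. -/
noncomputable def matrixSpectralRadius {n : ℕ} (M : Matrix (Fin n) (Fin n) ℝ) : ℝ :=
  sSup ((fun z : ℂ => ‖z‖) '' spectrum ℂ (M.map (Complex.ofReal)))

open Real Matrix

section TangentLine

variable {α : Type*} {w g : α → ℝ} {c : ℝ}

lemma exp_mul_sub_add_one_le_exp (c x : ℝ) : exp c * (x - c + 1) ≤ exp x := by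
  calc exp c * (x - c + 1) ≤ exp c * exp (x - c) := by gcongr; exact add_one_le_exp _
    _ = exp x := by rw [← exp_add, add_sub_cancel]

lemma exp_mul_sub_add_one_lt_exp {c x : ℝ} (h : x ≠ c) : exp c * (x - c + 1) < exp x := by
  calc exp c * (x - c + 1) < exp c * exp (x - c) := by
        gcongr; exact add_one_lt_exp (sub_ne_zero.mpr h)
    _ = exp x := by rw [← exp_add, add_sub_cancel]

lemma mul_exp_mul_sub_add_one_eq (c : ℝ) :
    (fun a => w a * (exp c * (g a - c + 1))) =
      fun a => exp c * (w a * g a + (1 - c) * w a) := by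
  ext a; ring

lemma hasSum_mul_exp_mul_sub_add_one (hw : Summable w) (hwg : Summable fun a => w a * g a)
    (hc : c * ∑' a, w a = ∑' a, w a * g a) :
    HasSum (fun a => w a * (exp c * (g a - c + 1))) (exp c * ∑' a, w a) := by
  rw [mul_exp_mul_sub_add_one_eq]
  have h := (hwg.hasSum.add (hw.hasSum.mul_left (1 - c))).mul_left (exp c)
  rwa [← hc, show c * ∑' a, w a + (1 - c) * ∑' a, w a = ∑' a, w a by ring] at h

/-- Jensen's inequality for `exp` and the discrete weights `w`, under which `g` has mean `c`. -/
theorem exp_mul_tsum_le_tsum_mul_exp (hw₀ : ∀ a, 0 ≤ w a) (hw : Summable w)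
    (hwg : Summable fun a => w a * g a) (hwe : Summable fun a => w a * exp (g a))
    (hc : c * ∑' a, w a = ∑' a, w a * g a) :
    exp c * ∑' a, w a ≤ ∑' a, w a * exp (g a) :=
  hasSum_le (fun a => mul_le_mul_of_nonneg_left (exp_mul_sub_add_one_le_exp c (g a)) (hw₀ a))
    (hasSum_mul_exp_mul_sub_add_one hw hwg hc) hwe.hasSum

theorem exp_mul_tsum_lt_tsum_mul_exp (hw₀ : ∀ a, 0 ≤ w a) (hw : Summable w)
    (hwg : Summable fun a => w a * g a) (hwe : Summable fun a => w a * exp (g a))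
    (hc : c * ∑' a, w a = ∑' a, w a * g a) {a a' : α} (ha : 0 < w a) (ha' : 0 < w a')
    (hne : g a ≠ g a') :
    exp c * ∑' a, w a < ∑' a, w a * exp (g a) := by
  obtain ⟨b, hb, hbc⟩ : ∃ b, 0 < w b ∧ g b ≠ c := by
    by_cases h : g a = c
    · exact ⟨a', ha', fun h' => hne (h.trans h'.symm)⟩
    · exact ⟨a, ha, h⟩
  exact hasSum_lt (fun a => mul_le_mul_of_nonneg_left (exp_mul_sub_add_one_le_exp c (g a)) (hw₀ a))
    (mul_lt_mul_of_pos_left (exp_mul_sub_add_one_lt_exp hbc) hb)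
    (hasSum_mul_exp_mul_sub_add_one hw hwg hc) hwe.hasSum

end TangentLine

lemma log_add_le_log_of_exp_mul_le {A B c : ℝ} (hA : 0 < A) (h : exp c * A ≤ B) :
    log A + c ≤ log B := by
  rw [le_log_iff_exp_le ((mul_pos (exp_pos c) hA).trans_le h), exp_add, exp_log hA, mul_comm]
  exact h

lemma log_add_lt_log_of_exp_mul_lt {A B c : ℝ} (hA : 0 < A) (h : exp c * A < B) :
    log A + c < log B := by
  rw [lt_log_iff_exp_lt ((mul_pos (exp_pos c) hA).trans h), exp_add, exp_log hA, mul_comm]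
  exact h

section Tilting

variable {ι : Type*} [Fintype ι] {ν : (ι → ℕ) → ℝ}

/-- `tiltedMass ν v` is the generating function `∑ ν k x^k` at `x = exp v`. -/
noncomputable def tiltedMass (ν : (ι → ℕ) → ℝ) (v : ι → ℝ) : ℝ :=
  ∑' k, ν k * exp (∑ l, v l * k l)

/-- `tiltedMean (μ i) θ j` is the entry `(M_θ)ᵢⱼ` of the mean matrix of the tilting `μ_θ`. -/
noncomputable def tiltedMean (ν : (ι → ℕ) → ℝ) (θ : ι → ℝ) (j : ι) : ℝ :=
  (∑' k, ν k * exp (∑ l, θ l * k l) * k j) / tiltedMass ν θ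

lemma prod_exp_pow_eq_exp_sum (v : ι → ℝ) (k : ι → ℕ) :
    ∏ j, exp (v j) ^ k j = exp (∑ l, v l * k l) := by
  rw [exp_sum]
  congr 1
  ext j
  rw [← exp_nat_mul, mul_comm]

lemma tsum_mul_prod_exp_pow (ν : (ι → ℕ) → ℝ) (v : ι → ℝ) :
    ∑' k, ν k * ∏ j, exp (v j) ^ k j = tiltedMass ν v := by
  simp only [prod_exp_pow_eq_exp_sum, tiltedMass]

lemma summable_mul_exp_of_summable_mul_prod_pow
    (hν : ∀ x : ι → ℝ, Summable fun k => ν k * ∏ j, x j ^ k j) (v : ι → ℝ) :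
    Summable fun k => ν k * exp (∑ l, v l * k l) := by
  simpa only [prod_exp_pow_eq_exp_sum] using hν (fun j => exp (v j))

lemma summable_mul_exp_mul_coord (hν₀ : ∀ k, 0 ≤ ν k)
    (hν : ∀ v : ι → ℝ, Summable fun k => ν k * exp (∑ l, v l * k l)) (θ : ι → ℝ) (j : ι) :
    Summable fun k => ν k * exp (∑ l, θ l * k l) * k j := by
  classical
  refine (hν (θ + Pi.single j 1)).of_nonneg_of_le (fun k => by positivity [hν₀ k]) fun k => ?_
  have hsum : ∑ l, (θ + Pi.single j 1 : ι → ℝ) l * (k l : ℝ) = ∑ l, θ l * k l + k j := by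
    simp [add_mul, Finset.sum_add_distrib, Pi.single_apply]
  rw [hsum, exp_add, ← mul_assoc]
  have := hν₀ k
  gcongr
  linarith [add_one_le_exp (k j : ℝ)]

lemma tiltedMass_pos (hν₀ : ∀ k, 0 ≤ ν k) {θ : ι → ℝ}
    (hθ : Summable fun k => ν k * exp (∑ l, θ l * k l)) {k : ι → ℕ} (hk : 0 < ν k) :
    0 < tiltedMass ν θ :=
  hθ.tsum_pos (fun k => by positivity [hν₀ k]) k (by positivity)

lemma summable_mul_exp_mul_linear (hν₀ : ∀ k, 0 ≤ ν k)
    (hν : ∀ v : ι → ℝ, Summable fun k => ν k * exp (∑ l, v l * k l)) (θ Z : ι → ℝ) :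
    Summable fun k => ν k * exp (∑ l, θ l * k l) * ∑ j, Z j * k j := by
  simp only [Finset.mul_sum, mul_left_comm _ (Z _)]
  exact summable_sum fun j _ => (summable_mul_exp_mul_coord hν₀ hν θ j).mul_left (Z j)

lemma sum_tiltedMean_mul_mul_tiltedMass (hν₀ : ∀ k, 0 ≤ ν k)
    (hν : ∀ v : ι → ℝ, Summable fun k => ν k * exp (∑ l, v l * k l)) {θ : ι → ℝ}
    (hθ : tiltedMass ν θ ≠ 0) (Z : ι → ℝ) :
    (∑ j, tiltedMean ν θ j * Z j) * tiltedMass ν θ =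
      ∑' k, ν k * exp (∑ l, θ l * k l) * ∑ j, Z j * k j := by
  simp only [Finset.mul_sum, mul_left_comm _ (Z _)]
  rw [Summable.tsum_finsetSum fun j _ => (summable_mul_exp_mul_coord hν₀ hν θ j).mul_left (Z j),
    Finset.sum_mul]
  refine Finset.sum_congr rfl fun j _ => ?_
  rw [tsum_mul_left, tiltedMean]
  field_simp

lemma mul_exp_mul_exp_sub (ν : (ι → ℕ) → ℝ) (θ t : ι → ℝ) (k : ι → ℕ) :
    ν k * exp (∑ l, θ l * k l) * exp (∑ j, (t - θ) j * k j) = ν k * exp (∑ l, t l * k l) := by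
  rw [mul_assoc, ← exp_add, ← Finset.sum_add_distrib]
  simp only [Pi.sub_apply, ← add_mul, add_sub_cancel]

theorem log_tiltedMass_add_le (hν₀ : ∀ k, 0 ≤ ν k)
    (hν : ∀ v : ι → ℝ, Summable fun k => ν k * exp (∑ l, v l * k l)) {k : ι → ℕ} (hk : 0 < ν k)
    (θ t : ι → ℝ) :
    log (tiltedMass ν θ) + ∑ j, tiltedMean ν θ j * (t - θ) j ≤ log (tiltedMass ν t) := by
  have hθ := tiltedMass_pos hν₀ (hν θ) hk
  refine log_add_le_log_of_exp_mul_le hθ ?_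
  have key := mul_exp_mul_exp_sub ν θ t
  unfold tiltedMass
  rw [← tsum_congr key]
  exact exp_mul_tsum_le_tsum_mul_exp (fun k => by positivity [hν₀ k]) (hν θ)
    (summable_mul_exp_mul_linear hν₀ hν θ _) ((hν t).congr fun k => (key k).symm)
    (sum_tiltedMean_mul_mul_tiltedMass hν₀ hν hθ.ne' _)

theorem log_tiltedMass_add_lt (hν₀ : ∀ k, 0 ≤ ν k)
    (hν : ∀ v : ι → ℝ, Summable fun k => ν k * exp (∑ l, v l * k l)) {θ t : ι → ℝ}
    {k k' : ι → ℕ} (hk : 0 < ν k) (hk' : 0 < ν k')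
    (hne : ∑ j, (t - θ) j * k j ≠ ∑ j, (t - θ) j * k' j) :
    log (tiltedMass ν θ) + ∑ j, tiltedMean ν θ j * (t - θ) j < log (tiltedMass ν t) := by
  have hθ := tiltedMass_pos hν₀ (hν θ) hk
  refine log_add_lt_log_of_exp_mul_lt hθ ?_
  have key := mul_exp_mul_exp_sub ν θ t
  unfold tiltedMass
  rw [← tsum_congr key]
  exact exp_mul_tsum_lt_tsum_mul_exp (fun k => by positivity [hν₀ k]) (hν θ)
    (summable_mul_exp_mul_linear hν₀ hν θ _) ((hν t).congr fun k => (key k).symm)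
    (sum_tiltedMean_mul_mul_tiltedMass hν₀ hν hθ.ne' _) (by positivity) (by positivity) hne

end Tilting

lemma HasSum.exists_pos {α : Type*} {f : α → ℝ} {s : ℝ} (hf : HasSum f s) (hs : 0 < s) :
    ∃ a, 0 < f a := by
  by_contra! h
  exact hs.not_ge (hasSum_le h hf hasSum_zero)

section Eigenvector

variable {ι : Type*} [Fintype ι] {X a b θ t : ι → ℝ} {M : Matrix ι ι ℝ}

lemma sum_mul_sub_sub_sum_mul_sub_eq_dotProduct (hXM : X ᵥ* M = X) :
    ∑ i, X i * (b i - t i) - ∑ i, X i * (a i - θ i) = X ⬝ᵥ (b - (a + M *ᵥ (t - θ))) := by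
  rw [dotProduct_sub, dotProduct_add, dotProduct_mulVec, hXM]
  simp only [dotProduct, Pi.sub_apply, mul_sub, Finset.sum_sub_distrib]
  ring

theorem sum_mul_sub_le_of_add_mulVec_le (hX : 0 ≤ X) (hXM : X ᵥ* M = X)
    (h : a + M *ᵥ (t - θ) ≤ b) : ∑ i, X i * (a i - θ i) ≤ ∑ i, X i * (b i - t i) := by
  rw [← sub_nonneg, sum_mul_sub_sub_sum_mul_sub_eq_dotProduct hXM]
  exact dotProduct_nonneg_of_nonneg hX (sub_nonneg.2 h)

theorem sum_mul_sub_lt_of_add_mulVec_lt (hX : ∀ i, 0 < X i) (hXM : X ᵥ* M = X)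
    (h : a + M *ᵥ (t - θ) ≤ b) {i : ι} (hi : (a + M *ᵥ (t - θ)) i < b i) :
    ∑ i, X i * (a i - θ i) < ∑ i, X i * (b i - t i) := by
  rw [← sub_pos, sum_mul_sub_sub_sum_mul_sub_eq_dotProduct hXM]
  exact Finset.sum_pos' (fun j _ => mul_nonneg (hX j).le (sub_nonneg.2 (h j)))
    ⟨i, Finset.mem_univ i, mul_pos (hX i) (sub_pos.2 hi)⟩

end Eigenvector

theorem critical_parameter_unique_maximizer_general
    (K : ℕ) (μ : Fin K → (Fin K → ℕ) → ℝ)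
    (hpos : ∀ i k, 0 ≤ μ i k) (hsum : ∀ i, HasSum (μ i) 1)
    -- entire
    (hent : ∀ i (x : Fin K → ℝ), Summable (fun k : Fin K → ℕ => μ i k * ∏ j, x j ^ k j))
    (φ : Fin K → (Fin K → ℝ) → ℝ)
    (hφ : ∀ i x, φ i x = ∑' k : Fin K → ℕ, μ i k * ∏ j, x j ^ k j)
    -- nonlocalized
    (hnonloc : ∀ Z : Fin K → ℝ, Z ≠ 0 →
      ∃ (i : Fin K) (k k' : Fin K → ℕ), 0 < μ i k ∧ 0 < μ i k' ∧
        (∑ j, Z j * k j) ≠ (∑ j, Z j * k' j))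
    -- a critical tilting parameter θ, with mean matrix Mθ of the tilted family
    (θ : Fin K → ℝ)
    (Mθ : Matrix (Fin K) (Fin K) ℝ)
    (hMθ : ∀ i j, Mθ i j =
      (∑' k : Fin K → ℕ, μ i k * Real.exp (∑ l, θ l * k l) * k j) /
        (∑' k : Fin K → ℕ, μ i k * Real.exp (∑ l, θ l * k l)))
    -- the asymptotic direction: normalized positive left 1-eigenvector of Mθ
    (X : Fin K → ℝ)
    (hXpos : ∀ i, 0 < X i)
    (hXeig : Matrix.vecMul X Mθ = X) :
    ∀ t : Fin K → ℝ,
      (-(∑ i, X i * (Real.log (φ i (fun j => Real.exp (t j))) - t i))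
        ≤ -(∑ i, X i * (Real.log (φ i (fun j => Real.exp (θ j))) - θ i))) ∧
      (t ≠ θ →
        -(∑ i, X i * (Real.log (φ i (fun j => Real.exp (t j))) - t i))
          < -(∑ i, X i * (Real.log (φ i (fun j => Real.exp (θ j))) - θ i))) := by
  intro t
  have hφ_eq (i : Fin K) (v : Fin K → ℝ) : φ i (fun j => exp (v j)) = tiltedMass (μ i) v := by
    rw [hφ, tsum_mul_prod_exp_pow]
  have hsumm (i : Fin K) := summable_mul_exp_of_summable_mul_prod_pow (hent i)
  have hMθ_eq : Mθ = Matrix.of fun i j => tiltedMean (μ i) θ j := Matrix.ext hMθ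
  have hle : (fun i => log (tiltedMass (μ i) θ)) + Mθ *ᵥ (t - θ) ≤
      fun i => log (tiltedMass (μ i) t) := fun i => by
    obtain ⟨_, hk⟩ := (hsum i).exists_pos one_pos
    rw [hMθ_eq]
    exact log_tiltedMass_add_le (hpos i) (hsumm i) hk θ t
  simp only [hφ_eq]
  refine ⟨neg_le_neg (sum_mul_sub_le_of_add_mulVec_le (fun i => (hXpos i).le) hXeig hle),
    fun hne => neg_lt_neg ?_⟩
  obtain ⟨i, k, k', hk, hk', hne⟩ := hnonloc (t - θ) (sub_ne_zero.2 hne)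
  refine sum_mul_sub_lt_of_add_mulVec_lt hXpos hXeig hle (i := i) ?_
  rw [hMθ_eq]
  exact log_tiltedMass_add_lt (hpos i) (hsumm i) hk hk' hne

/-- if `μ_θ` is critical with asymptotic direction `X_θ`
(normalized positive left 1-eigenvector of `M_θ`), then `θ` is the unique
global maximizer of `f_{X_θ}(·) = −X_θᵀ χ(·)` on `ℝ^K`. -/
theorem critical_parameter_unique_maximizer
    (K : ℕ) (μ : Fin K → (Fin K → ℕ) → ℝ)
    (hpos : ∀ i k, 0 ≤ μ i k) (hsum : ∀ i, HasSum (μ i) 1)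
    -- entire
    (hent : ∀ i (x : Fin K → ℝ), Summable (fun k : Fin K → ℕ => μ i k * ∏ j, x j ^ k j))
    (φ : Fin K → (Fin K → ℝ) → ℝ)
    (hφ : ∀ i x, φ i x = ∑' k : Fin K → ℕ, μ i k * ∏ j, x j ^ k j)
    -- finite: there is a positive fixed point of the generating functions in (0,1]^K
    (hfin : ∃ p : Fin K → ℝ, (∀ i, 0 < p i ∧ p i ≤ 1) ∧ ∀ i, φ i p = p i)
    -- nondegenerate
    (hnondeg : ∃ (i : Fin K) (k : Fin K → ℕ), 2 ≤ ∑ j, k j ∧ 0 < μ i k)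
    -- nonlocalized
    (hnonloc : ∀ Z : Fin K → ℝ, Z ≠ 0 →
      ∃ (i : Fin K) (k k' : Fin K → ℕ), 0 < μ i k ∧ 0 < μ i k' ∧
        (∑ j, Z j * k j) ≠ (∑ j, Z j * k' j))
    -- irreducible mean matrix
    (M : Matrix (Fin K) (Fin K) ℝ)
    (hM : ∀ i j, M i j = ∑' k : Fin K → ℕ, μ i k * k j)
    (hirr : ∀ i j, ∃ m : ℕ, 0 < m ∧ 0 < (M ^ m) i j)
    -- a critical tilting parameter θ, with mean matrix Mθ of the tilted family
    (θ : Fin K → ℝ)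
    (Mθ : Matrix (Fin K) (Fin K) ℝ)
    (hMθ : ∀ i j, Mθ i j =
      (∑' k : Fin K → ℕ, μ i k * Real.exp (∑ l, θ l * k l) * k j) /
        (∑' k : Fin K → ℕ, μ i k * Real.exp (∑ l, θ l * k l)))
    (hcrit : matrixSpectralRadius Mθ = 1)
    -- the asymptotic direction: normalized positive left 1-eigenvector of Mθ
    (X : Fin K → ℝ)
    (hXpos : ∀ i, 0 < X i) (hXnorm : ∑ i, X i = 1)
    (hXeig : Matrix.vecMul X Mθ = X) :
    ∀ t : Fin K → ℝ,
      (-(∑ i, X i * (Real.log (φ i (fun j => Real.exp (t j))) - t i))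
        ≤ -(∑ i, X i * (Real.log (φ i (fun j => Real.exp (θ j))) - θ i))) ∧
      (t ≠ θ →
        -(∑ i, X i * (Real.log (φ i (fun j => Real.exp (t j))) - t i))
          < -(∑ i, X i * (Real.log (φ i (fun j => Real.exp (θ j))) - θ i))) :=
  critical_parameter_unique_maximizer_general K μ hpos hsum hent φ hφ hnonloc θ Mθ hMθ X hXpos hXeig
end

section
/- Let μ be an entire and finite projection, and let X be an accessible direction. Then there exists a constant m_X ∈ ℝ such that X^⊺ χ(θ) ≥ m_X for all θ ∈ ℝ^K. More precisely, if T is a finite tree witnessing accessibility of X, with probability p > 0 under μ, root and one leaf of a common type i with μ^(i)(0) = p_i⁰ > 0, then e^{Ñ(T)^⊺ χ(θ)} ≥ p/p_i⁰ for all θ, where Ñ(T) is the type-count vector of T excluding the root. -/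
open scoped BigOperators

/-- Finite multitype plane trees with `K` types. -/
inductive MTree (K : ℕ) : Type
  | node : Fin K → List (MTree K) → MTree K

namespace MTree
variable {K : ℕ}

def typeOf : MTree K → Fin K
  | node i _ => i

/-- The list of types of all vertices, the root first. -/
def vertices : MTree K → List (Fin K)
  | node i ts => i :: (ts.attach.map (fun t => vertices t.1)).flatten
decreasing_by
  have := List.sizeOf_lt_of_mem t.2
  simp only [MTree.node.sizeOf_spec]
  omega

/-- Types of the leaves of the tree. -/
def leafTypes : MTree K → List (Fin K)
  | node i [] => [i]
  | node _ ts => (ts.attach.map (fun t => leafTypes t.1)).flatten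
decreasing_by
  have := List.sizeOf_lt_of_mem t.2
  simp only [MTree.node.sizeOf_spec]
  omega

/-- Probability of a given finite plane tree under the branching mechanism `ζ`. -/
noncomputable def prob (ζ : Fin K → List (Fin K) → ℝ) : MTree K → ℝ
  | node i ts => ζ i (ts.map typeOf) * (ts.attach.map (fun t => prob ζ t.1)).prod
decreasing_by
  have := List.sizeOf_lt_of_mem t.2
  simp only [MTree.node.sizeOf_spec]
  omega

/-- `Ñ(T) j`: the number of non-root vertices of type `j`. -/
def ntilde (T : MTree K) (j : Fin K) : ℕ := T.vertices.tail.count j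

end MTree

namespace MAux
variable {K : ℕ}

theorem strongInd {K : ℕ} {P : MTree K → Prop}
    (h : ∀ i ts, (∀ t ∈ ts, P t) → P (MTree.node i ts)) : ∀ T, P T
  | .node i ts => h i ts (fun t ht => strongInd h t)
decreasing_by
  have := List.sizeOf_lt_of_mem ht
  simp only [MTree.node.sizeOf_spec]
  omega

theorem vertices_eq (T : MTree K) : T.vertices = T.typeOf :: T.vertices.tail := by
  cases T with
  | node i ts => rw [MTree.vertices]; simp [MTree.typeOf, MTree.vertices]

theorem prob_eq (ζ : Fin K → List (Fin K) → ℝ) (i : Fin K) (ts : List (MTree K)) :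
    MTree.prob ζ (.node i ts)
      = ζ i (ts.map MTree.typeOf) * (ts.attach.map (fun t => MTree.prob ζ t.1)).prod := by
  rw [MTree.prob]

theorem leafTypes_cons (i : Fin K) (t : MTree K) (ts : List (MTree K)) :
    (MTree.node i (t :: ts)).leafTypes
      = ((t :: ts).attach.map (fun t => MTree.leafTypes t.1)).flatten := by
  rw [MTree.leafTypes]
  simp

end MAux

namespace MAux
variable {K : ℕ}

theorem list_prod_Icc (l : List ℝ) (h : ∀ a ∈ l, 0 ≤ a ∧ a ≤ 1) :
    0 ≤ l.prod ∧ l.prod ≤ 1 := by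
  induction l with
  | nil => simp
  | cons a l ih =>
    have ha := h a (by simp)
    have hl := ih (fun b hb => h b (List.mem_cons_of_mem _ hb))
    simp only [List.prod_cons]
    constructor
    · exact mul_nonneg ha.1 hl.1
    · nlinarith [ha.1, ha.2, hl.1, hl.2]

theorem list_prod_le (l : List ℝ) (h : ∀ a ∈ l, 0 ≤ a ∧ a ≤ 1)
    {c : ℝ} (hc : 0 ≤ c) {b : ℝ} (hb : b ∈ l) (hbc : b ≤ c) : l.prod ≤ c := by
  induction l with
  | nil => simp at hb
  | cons a l ih =>
    have ha := h a (by simp)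
    have hl := list_prod_Icc l (fun b hb => h b (List.mem_cons_of_mem _ hb))
    simp only [List.prod_cons]
    rcases List.mem_cons.1 hb with rfl | hb'
    · nlinarith [hl.1, hl.2]
    · have := ih (fun b hb => h b (List.mem_cons_of_mem _ hb)) hb'
      nlinarith [ha.1, ha.2, hl.1]

theorem prob_Icc (ξ : Fin K → List (Fin K) → ℝ) (hξ : ∀ i w, 0 ≤ ξ i w ∧ ξ i w ≤ 1) :
    ∀ T : MTree K, 0 ≤ MTree.prob ξ T ∧ MTree.prob ξ T ≤ 1 := by
  apply strongInd
  intro i ts ih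
  rw [prob_eq]
  have hl : ∀ a ∈ (ts.attach.map fun t => MTree.prob ξ t.1), 0 ≤ a ∧ a ≤ 1 := by
    intro a ha
    rcases List.mem_map.1 ha with ⟨t, _, rfl⟩
    exact ih t.1 t.2
  have hp := list_prod_Icc _ hl
  have hz := hξ i (ts.map MTree.typeOf)
  exact ⟨mul_nonneg hz.1 hp.1, by nlinarith [hz.1, hz.2, hp.1, hp.2]⟩

theorem prob_le_leaf (ξ : Fin K → List (Fin K) → ℝ) (hξ : ∀ i w, 0 ≤ ξ i w ∧ ξ i w ≤ 1)
    (i : Fin K) : ∀ T : MTree K, i ∈ T.leafTypes → MTree.prob ξ T ≤ ξ i [] := by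
  apply strongInd
  intro j ts ih hmem
  cases ts with
  | nil =>
    rw [MTree.leafTypes] at hmem
    simp at hmem
    subst hmem
    rw [prob_eq]
    simp
  | cons t ts' =>
    rw [leafTypes_cons] at hmem
    rw [List.mem_flatten] at hmem
    obtain ⟨l, hl, hil⟩ := hmem
    rcases List.mem_map.1 hl with ⟨t', _, rfl⟩
    have h1 : MTree.prob ξ t'.1 ≤ ξ i [] := ih t'.1 t'.2 hil
    rw [prob_eq]
    have hlb : ∀ a ∈ ((t :: ts').attach.map fun t => MTree.prob ξ t.1), 0 ≤ a ∧ a ≤ 1 := by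
      intro a ha
      rcases List.mem_map.1 ha with ⟨s, _, rfl⟩
      exact prob_Icc ξ hξ s.1
    have hmem' : MTree.prob ξ t'.1 ∈ ((t :: ts').attach.map fun t => MTree.prob ξ t.1) :=
      List.mem_map.2 ⟨t', List.mem_attach _ _, rfl⟩
    have h2 := list_prod_le _ hlb (hξ i []).1 hmem' h1
    have hz := hξ j ((t :: ts').map MTree.typeOf)
    have h3 := list_prod_Icc _ hlb
    nlinarith [hz.1, hz.2, h3.1, (hξ i []).1]

end MAux

namespace MAux
variable {K : ℕ}

theorem prod_map_count (l : List (Fin K)) (f : Fin K → ℝ) :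
    (l.map f).prod = ∏ j : Fin K, f j ^ l.count j := by
  rw [Finset.prod_list_map_count]
  apply Finset.prod_subset (Finset.subset_univ _)
  intro j _ hj
  rw [List.count_eq_zero_of_not_mem (by simpa using hj)]
  simp

theorem prob_tilt (ζ ξ : Fin K → List (Fin K) → ℝ) (x φv : Fin K → ℝ)
    (hξ : ∀ i w, ξ i w * φv i = ζ i w * (w.map x).prod) :
    ∀ T : MTree K,
      MTree.prob ζ T * ((T.vertices.tail).map x).prod
        = MTree.prob ξ T * ((T.vertices).map φv).prod := by
  apply strongInd
  intro i ts ih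
  rw [prob_eq, prob_eq, MTree.vertices]
  simp only [List.tail_cons, List.map_cons, List.prod_cons, List.map_flatten,
    List.prod_flatten, List.map_map, Function.comp_def]
  have hC : (ts.attach.map fun t => (List.map x (t.1).vertices).prod).prod
      = (ts.attach.map fun t => x (t.1).typeOf).prod *
        (ts.attach.map fun t => (List.map x (t.1).vertices.tail).prod).prod := by
    rw [← List.prod_map_mul]
    congr 1
    apply List.map_congr_left
    intro t _
    rw [vertices_eq t.1]
    simp
  have hBD : (ts.attach.map fun t => MTree.prob ξ t.1).prod *
        (ts.attach.map fun t => (List.map φv (t.1).vertices).prod).prod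
      = (ts.attach.map fun t => MTree.prob ζ t.1).prod *
        (ts.attach.map fun t => (List.map x (t.1).vertices.tail).prod).prod := by
    rw [← List.prod_map_mul, ← List.prod_map_mul]
    congr 1
    apply List.map_congr_left
    intro t _
    exact (ih t.1 t.2).symm
  have hW : (List.map x (List.map MTree.typeOf ts)).prod
      = (ts.attach.map fun t => x (t.1).typeOf).prod := by
    rw [List.map_map]
    conv_lhs => rw [← List.attach_map_subtype_val ts]
    rw [List.map_map]
    rfl
  have hz := hξ i (List.map MTree.typeOf ts)
  set A := (ts.attach.map fun t => MTree.prob ζ t.1).prod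
  set B := (ts.attach.map fun t => MTree.prob ξ t.1).prod
  set C := (ts.attach.map fun t => (List.map x (t.1).vertices).prod).prod
  set D := (ts.attach.map fun t => (List.map φv (t.1).vertices).prod).prod
  set E := (ts.attach.map fun t => (List.map x (t.1).vertices.tail).prod).prod
  set W := (List.map x (List.map MTree.typeOf ts)).prod
  set W' := (ts.attach.map fun t => x (t.1).typeOf).prod
  rw [hC]
  linear_combination (-(B * D)) * hz - ζ i (List.map MTree.typeOf ts) * W * hBD -
    ζ i (List.map MTree.typeOf ts) * A * E * hW

end MAux

namespace MAux
variable {K : ℕ}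

theorem hasSum_tilt (ζ : Fin K → List (Fin K) → ℝ)
    (hζpos : ∀ i w, 0 ≤ ζ i w) (hζsum : ∀ i, HasSum (ζ i) 1)
    (μ : Fin K → (Fin K → ℕ) → ℝ)
    (hμ : ∀ i k, μ i k =
      ∑' w : {w : List (Fin K) // ∀ j, w.count j = k j}, ζ i w.1)
    (hent : ∀ i (x : Fin K → ℝ), Summable (fun k : Fin K → ℕ => μ i k * ∏ j, x j ^ k j))
    (φ : Fin K → (Fin K → ℝ) → ℝ)
    (hφ : ∀ i x, φ i x = ∑' k : Fin K → ℕ, μ i k * ∏ j, x j ^ k j)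
    (x : Fin K → ℝ) (hx : ∀ j, 0 ≤ x j) (i : Fin K) :
    HasSum (fun w : List (Fin K) => ζ i w * (w.map x).prod) (φ i x) := by
  classical
  set c : List (Fin K) → (Fin K → ℕ) := fun w j => w.count j with hc
  set g : List (Fin K) → ℝ := fun w => ζ i w * (w.map x).prod with hg
  have hfib : ∀ k : Fin K → ℕ,
      HasSum (fun w : {w // c w = k} => g w.1) (μ i k * ∏ j, x j ^ k j) := by
    intro k
    let e2 : {w : List (Fin K) // c w = k} ≃ {w : List (Fin K) // ∀ j, w.count j = k j} :=
      Equiv.subtypeEquivRight (fun w => funext_iff)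
    have hsum2 : Summable (fun w : {w : List (Fin K) // ∀ j, w.count j = k j} => ζ i w.1) :=
      (hζsum i).summable.subtype _
    have ht2 : HasSum (fun w : {w : List (Fin K) // ∀ j, w.count j = k j} => ζ i w.1)
        (μ i k) := by
      rw [hμ i k]
      exact hsum2.hasSum
    have ht3 : HasSum (fun w : {w : List (Fin K) // c w = k} => ζ i w.1) (μ i k) :=
      (e2.hasSum_iff).mpr ht2
    have ht4 := ht3.mul_right (∏ j, x j ^ k j)
    have heq : (fun w : {w : List (Fin K) // c w = k} => g w.1)
        = fun w => ζ i w.1 * ∏ j, x j ^ k j := by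
      funext w
      simp only [hg, prod_map_count]
      congr 1
      exact Finset.prod_congr rfl fun j _ => congrArg (x j ^ ·) (congrFun w.2 j)
    rw [heq]
    exact ht4
  have hF : ∀ p : Σ k : Fin K → ℕ, {w : List (Fin K) // c w = k}, 0 ≤ g p.2.1 := by
    intro p
    apply mul_nonneg (hζpos _ _)
    apply List.prod_nonneg
    intro a ha
    rcases List.mem_map.1 ha with ⟨j, _, rfl⟩
    exact hx j
  have hsig : Summable (fun p : Σ k : Fin K → ℕ, {w : List (Fin K) // c w = k} => g p.2.1) := by
    apply (summable_sigma_of_nonneg hF).mpr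
    refine ⟨fun k => (hfib k).summable, ?_⟩
    apply (hent i x).congr
    intro k
    exact ((hfib k).tsum_eq).symm
  have hgsum : Summable g := by
    refine (Equiv.sigmaFiberEquiv c).summable_iff.mp ?_
    exact hsig
  have htsum : (∑' w, g w) = φ i x := by
    have hA : (∑' p : Σ k : Fin K → ℕ, {w : List (Fin K) // c w = k}, g p.2.1)
        = ∑' k : Fin K → ℕ, ∑' w : {w : List (Fin K) // c w = k}, g w.1 :=
      Summable.tsum_sigma' (fun k => (hfib k).summable) hsig
    have hB : (∑' p : Σ k : Fin K → ℕ, {w : List (Fin K) // c w = k}, g p.2.1) = ∑' w, g w :=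
      Equiv.tsum_eq (Equiv.sigmaFiberEquiv c) g
    rw [← hB, hA, hφ i x]
    exact tsum_congr fun k => (hfib k).tsum_eq
  have := hgsum.hasSum
  rwa [htsum] at this

end MAux

/-- if `μ` is entire and finite and `X` is an accessible
direction, witnessed by a finite tree `T` with probability `p > 0`, root and a
leaf of a common type `i` with `μ⁽ⁱ⁾(0) = p_i⁰ > 0`, and `Ñ(T)` collinear with
`X`, then `e^{Ñ(T)ᵀ χ(θ)} ≥ p / p_i⁰` for every `θ`; in particular there is a
constant `m_X` with `Xᵀ χ(θ) ≥ m_X` for all `θ`. -/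
theorem accessible_direction_chi_bounded_below
    (K : ℕ) (ζ : Fin K → List (Fin K) → ℝ)
    (hζpos : ∀ i w, 0 ≤ ζ i w) (hζsum : ∀ i, HasSum (ζ i) 1)
    (μ : Fin K → (Fin K → ℕ) → ℝ)
    (hμ : ∀ i k, μ i k =
      ∑' w : {w : List (Fin K) // ∀ j, w.count j = k j}, ζ i w.1)
    -- entire
    (hent : ∀ i (x : Fin K → ℝ), Summable (fun k : Fin K → ℕ => μ i k * ∏ j, x j ^ k j))
    (φ : Fin K → (Fin K → ℝ) → ℝ)
    (hφ : ∀ i x, φ i x = ∑' k : Fin K → ℕ, μ i k * ∏ j, x j ^ k j)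
    -- finite: positive fixed point in (0,1]^K
    (hfin : ∃ p : Fin K → ℝ, (∀ i, 0 < p i ∧ p i ≤ 1) ∧ ∀ i, φ i p = p i)
    (χ : (Fin K → ℝ) → Fin K → ℝ)
    (hχ : ∀ t i, χ t i = Real.log (φ i (fun j => Real.exp (t j))) - t i)
    -- X is a nonzero nonnegative direction
    (X : Fin K → ℝ) (hXnonneg : ∀ j, 0 ≤ X j) (hXne : X ≠ 0)
    -- a tree T witnessing accessibility of X
    (T : MTree K) (i : Fin K)
    (hroot : T.typeOf = i)
    (hT : 0 < MTree.prob ζ T)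
    (hsize : 2 ≤ T.vertices.length)
    (hleaf : i ∈ T.leafTypes)
    (hp0 : 0 < μ i (fun _ => 0))
    (hcol : ∃ c : ℝ, 0 < c ∧ ∀ j, (T.ntilde j : ℝ) = c * X j) :
    (∀ θ : Fin K → ℝ,
        MTree.prob ζ T / μ i (fun _ => 0) ≤
          Real.exp (∑ j, (T.ntilde j : ℝ) * χ θ j)) ∧
      ∃ m : ℝ, ∀ θ : Fin K → ℝ, m ≤ ∑ j, X j * χ θ j := by
  classical
  obtain ⟨c, hc, hcX⟩ := hcol
  have key : ∀ θ : Fin K → ℝ,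
      MTree.prob ζ T / μ i (fun _ => 0) ≤ Real.exp (∑ j, (T.ntilde j : ℝ) * χ θ j) := by
    intro θ
    set x : Fin K → ℝ := fun j => Real.exp (θ j) with hxdef
    have hx : ∀ j, 0 < x j := fun j => Real.exp_pos _
    have hprodnn : ∀ w : List (Fin K), 0 ≤ (w.map x).prod := by
      intro w
      apply List.prod_nonneg
      intro a ha
      rcases List.mem_map.1 ha with ⟨j, _, rfl⟩
      exact (hx j).le
    set φv : Fin K → ℝ := fun j => φ j x with hφvdef
    have hts : ∀ j, HasSum (fun w => ζ j w * (w.map x).prod) (φv j) := fun j =>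
      MAux.hasSum_tilt ζ hζpos hζsum μ hμ hent φ hφ x (fun j => (hx j).le) j
    have hφvpos : ∀ j, 0 < φv j := by
      intro j
      obtain ⟨w0, hw0⟩ : ∃ w, ζ j w ≠ 0 := by
        by_contra h
        push_neg at h
        have h1 := hζsum j
        rw [show ζ j = 0 from funext h] at h1
        exact one_ne_zero (hasSum_zero.unique h1).symm
      have hprodpos : 0 < (w0.map x).prod := by
        apply List.prod_pos
        intro a ha
        rcases List.mem_map.1 ha with ⟨j', _, rfl⟩
        exact hx j'
      have hterm : 0 < ζ j w0 * (w0.map x).prod :=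
        mul_pos ((hζpos j w0).lt_of_ne (Ne.symm hw0)) hprodpos
      exact hterm.trans_le (le_hasSum (hts j) w0
        (fun b _ => mul_nonneg (hζpos j b) (hprodnn b)))
    set ξ : Fin K → List (Fin K) → ℝ := fun i' w => ζ i' w * (w.map x).prod / φv i' with hξdef
    have hξmul : ∀ i' w, ξ i' w * φv i' = ζ i' w * (w.map x).prod := by
      intro i' w
      rw [hξdef]
      exact div_mul_cancel₀ _ (hφvpos i').ne'
    have hξsum : ∀ i', HasSum (ξ i') 1 := by
      intro i'
      have h1 := (hts i').div_const (φv i')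
      rw [div_self (hφvpos i').ne'] at h1
      exact h1
    have hξIcc : ∀ i' w, 0 ≤ ξ i' w ∧ ξ i' w ≤ 1 := by
      intro i' w
      have h0 : ∀ b, 0 ≤ ξ i' b := fun b =>
        div_nonneg (mul_nonneg (hζpos _ _) (hprodnn b)) (hφvpos i').le
      exact ⟨h0 w, le_hasSum (hξsum i') w (fun b _ => h0 b)⟩
    have hleafb : MTree.prob ξ T ≤ ξ i [] := MAux.prob_le_leaf ξ hξIcc i T hleaf
    have hzi : ζ i [] = μ i (fun _ => 0) := by
      rw [hμ]
      symm
      apply HasSum.tsum_eq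
      have hb : ∀ j : Fin K, List.count j ([] : List (Fin K)) = (fun _ : Fin K => 0) j := by
        intro j; simp
      have := hasSum_single (α := ℝ)
        (f := fun w : {w : List (Fin K) // ∀ j, w.count j = (fun _ : Fin K => 0) j} => ζ i w.1)
        (⟨[], hb⟩ : {w : List (Fin K) // ∀ j, w.count j = (fun _ : Fin K => 0) j})
        (fun b hbne => by
          exfalso
          apply hbne
          obtain ⟨w, hw⟩ := b
          cases w with
          | nil => rfl
          | cons a t =>
            have := hw a
            simp at this)
      exact this
    have hid := MAux.prob_tilt ζ ξ x φv hξmul T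
    have hvert : T.vertices = i :: T.vertices.tail := by
      have h := MAux.vertices_eq T
      rw [hroot] at h
      exact h
    set Ex : ℝ := ((T.vertices.tail).map x).prod with hEx
    set Pf : ℝ := ((T.vertices.tail).map φv).prod with hPf
    have hid2 : MTree.prob ζ T * Ex = MTree.prob ξ T * (φv i * Pf) := by
      rw [hid]
      congr 1
      rw [hvert]
      simp [hPf]
    have hExc : Ex = ∏ j, x j ^ T.ntilde j := MAux.prod_map_count _ x
    have hPfc : Pf = ∏ j, φv j ^ T.ntilde j := MAux.prod_map_count _ φv
    have hExexp : Ex = Real.exp (∑ j, (T.ntilde j : ℝ) * θ j) := by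
      rw [hExc, Real.exp_sum]
      exact Finset.prod_congr rfl fun j _ => (Real.exp_nat_mul _ _).symm
    have hPfexp : Pf = Real.exp (∑ j, (T.ntilde j : ℝ) * Real.log (φv j)) := by
      rw [hPfc, Real.exp_sum]
      refine Finset.prod_congr rfl fun j _ => ?_
      rw [Real.exp_nat_mul, Real.exp_log (hφvpos j)]
    have hchi : ∑ j, (T.ntilde j : ℝ) * χ θ j
        = (∑ j, (T.ntilde j : ℝ) * Real.log (φv j)) - ∑ j, (T.ntilde j : ℝ) * θ j := by
      rw [← Finset.sum_sub_distrib]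
      exact Finset.sum_congr rfl fun j _ => by rw [hχ]; ring
    have hExpos : 0 < Ex := by rw [hExexp]; exact Real.exp_pos _
    have hPfpos : 0 < Pf := by rw [hPfexp]; exact Real.exp_pos _
    have hfinal : MTree.prob ζ T * Ex ≤ μ i (fun _ => 0) * Pf := by
      calc MTree.prob ζ T * Ex = MTree.prob ξ T * (φv i * Pf) := hid2
        _ ≤ ξ i [] * (φv i * Pf) := by
            apply mul_le_mul_of_nonneg_right hleafb
            exact mul_nonneg (hφvpos i).le hPfpos.le
        _ = μ i (fun _ => 0) * Pf := by
            have hx1 : ξ i [] = ζ i [] / φv i := by simp [hξdef]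
            rw [hx1, hzi]
            field_simp [(hφvpos i).ne']
    have hexpeq : Real.exp (∑ j, (T.ntilde j : ℝ) * χ θ j) = Pf / Ex := by
      rw [hchi, Real.exp_sub, ← hExexp, ← hPfexp]
    rw [div_le_iff₀ hp0, hexpeq, div_mul_eq_mul_div, le_div_iff₀ hExpos]
    linarith [hfinal]
  refine ⟨key, ⟨Real.log (MTree.prob ζ T / μ i (fun _ => 0)) / c, ?_⟩⟩
  intro θ
  have h1 := key θ
  have h2 : Real.log (MTree.prob ζ T / μ i fun _ => 0) ≤ ∑ j, (T.ntilde j : ℝ) * χ θ j :=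
    (Real.log_le_iff_le_exp (div_pos hT hp0)).mpr h1
  have h3 : ∑ j, (T.ntilde j : ℝ) * χ θ j = c * ∑ j, X j * χ θ j := by
    rw [Finset.mul_sum]
    exact Finset.sum_congr rfl fun j _ => by rw [hcX j]; ring
  rw [div_le_iff₀ hc, mul_comm (∑ j, X j * χ θ j) c, ← h3]
  exact h2
end

section
/- Let M be an irreducible nonnegative K×K matrix with spectral radius 1. Then the cofactor matrix com(M − I_K) has rank 1 and can be written as com(M − I_K)^⊺ = λ Y X^⊺ for some nonzero λ ∈ ℝ, where X is a left 1-eigenvector and Y a right 1-eigenvector of M, both with positive coordinates. -/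
/-!
The spectral radius hypothesis provides an eigenvalue `μ` with `‖μ‖ = 1` and bounds the traces
of all powers of `M` by `K`; by irreducibility the entries of all powers `M ^ k` are then
bounded. For an eigenvector `v` of `μ`, the vector `w = |v|` satisfies `w ≤ M w`. If `M w ≠ w`,
smoothing by a positive matrix commuting with `M` yields `u > 0` with `M u ≥ r u` for some
`r > 1`, so `M ^ k u` grows like `r ^ k`, a contradiction. Hence `M` has a positive fixed vector
`Y`, and `Mᵀ` one `X`; a minimal-ratio argument shows that each fixed space is a line. Since
`(M - 1) adj(M - 1) = adj(M - 1) (M - 1) = 0`, the columns of `adj(M - 1)` are multiples of `Y`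
and its rows multiples of `X`, so `adj(M - 1) = λ Y Xᵀ`; and `λ ≠ 0` because a diagonal cofactor
of `M - 1` vanishes only if the kernel of `M - 1` contains a nonzero vector with a zero
coordinate.
-/

open scoped BigOperators

open Matrix

namespace Matrix

section Spectrum

variable {n : Type*} [Fintype n] [DecidableEq n]

theorem spectrum_transpose {K : Type*} [Field K] (B : Matrix n n K) :
    spectrum K Bᵀ = spectrum K B := by
  ext μ
  simp only [mem_spectrum_iff_isRoot_charpoly, charpoly_transpose]

theorem norm_trace_le_card {B : Matrix n n ℂ} (hB : ∀ μ ∈ spectrum ℂ B, ‖μ‖ ≤ 1) :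
    ‖B.trace‖ ≤ Fintype.card n := by
  rw [trace_eq_sum_roots_charpoly]
  calc ‖B.charpoly.roots.sum‖ ≤ (B.charpoly.roots.map (‖·‖)).sum := norm_multiset_sum_le _
    _ ≤ Multiset.card B.charpoly.roots • (1 : ℝ) := by
        rw [← Multiset.card_map (‖·‖)]
        refine Multiset.sum_le_card_nsmul _ _ ?_
        simp only [Multiset.mem_map]
        rintro _ ⟨μ, hμ, rfl⟩
        exact hB μ (mem_spectrum_iff_isRoot_charpoly.mpr (Polynomial.isRoot_of_mem_roots hμ))
    _ ≤ Fintype.card n := by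
        rw [nsmul_one, Nat.cast_le, ← B.charpoly_natDegree_eq_dim]
        exact Polynomial.card_roots' _

theorem norm_trace_pow_le_card {B : Matrix n n ℂ} (hB : ∀ μ ∈ spectrum ℂ B, ‖μ‖ ≤ 1)
    {k : ℕ} (hk : 0 < k) : ‖(B ^ k).trace‖ ≤ Fintype.card n := by
  refine norm_trace_le_card fun μ hμ => ?_
  rw [spectrum.map_pow_of_pos B hk] at hμ
  obtain ⟨ν, hν, rfl⟩ := hμ
  rw [norm_pow]
  exact pow_le_one₀ (norm_nonneg ν) (hB ν hν)

end Spectrum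

section Nonneg

variable {n : Type*} [Fintype n] {M : Matrix n n ℝ}

theorem mulVec_mono (hM : ∀ i j, 0 ≤ M i j) {v w : n → ℝ} (h : v ≤ w) : M *ᵥ v ≤ M *ᵥ w :=
  fun i => Finset.sum_le_sum fun j _ => mul_le_mul_of_nonneg_left (h j) (hM i j)

theorem mulVec_apply_pos (hM : ∀ i j, 0 ≤ M i j) {v : n → ℝ} (hv : 0 ≤ v) {i j : n}
    (hij : 0 < M i j) (hj : 0 < v j) : 0 < (M *ᵥ v) i :=
  Finset.sum_pos' (fun l _ => mul_nonneg (hM i l) (hv l)) ⟨j, Finset.mem_univ j, mul_pos hij hj⟩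

theorem exists_nonneg_smul_le_mulVec [DecidableEq n] (hM : ∀ i j, 0 ≤ M i j) {μ : ℂ}
    (hμ : μ ∈ spectrum ℂ (M.map Complex.ofReal)) :
    ∃ w : n → ℝ, 0 ≤ w ∧ w ≠ 0 ∧ ‖μ‖ • w ≤ M *ᵥ w := by
  rw [← spectrum_toLin', ← Module.End.hasEigenvalue_iff_mem_spectrum] at hμ
  obtain ⟨v, hv⟩ := hμ.exists_hasEigenvector
  have hMv : M.map Complex.ofReal *ᵥ v = μ • v := by rw [← toLin'_apply]; exact hv.apply_eq_smul
  refine ⟨fun i => ‖v i‖, fun i => norm_nonneg _, fun h => hv.2 (funext fun i => ?_), fun i => ?_⟩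
  · simpa using congrFun h i
  · calc ‖μ‖ * ‖v i‖ = ‖(M.map Complex.ofReal *ᵥ v) i‖ := by simp [hMv]
      _ ≤ ∑ j, ‖M.map Complex.ofReal i j * v j‖ := norm_sum_le _ _
      _ = (M *ᵥ fun i => ‖v i‖) i := by
          simp [mulVec, dotProduct, Complex.norm_real, abs_of_nonneg (hM _ _)]

theorem pow_apply_self_le_card [DecidableEq n] (hM : ∀ i j, 0 ≤ M i j)
    (hspec : ∀ μ ∈ spectrum ℂ (M.map Complex.ofReal), ‖μ‖ ≤ 1) {k : ℕ} (hk : 0 < k) (i : n) :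
    (M ^ k) i i ≤ Fintype.card n :=
  calc (M ^ k) i i ≤ (M ^ k).trace :=
        Finset.single_le_sum (fun j _ => pow_apply_nonneg hM k j j) (Finset.mem_univ i)
    _ ≤ ‖((M ^ k).trace : ℂ)‖ := by rw [Complex.norm_real]; exact Real.le_norm_self _
    _ = ‖((M.map Complex.ofReal) ^ k).trace‖ := by
        rw [← Complex.ofRealHom_eq_coe, AddMonoidHom.map_trace]
        exact congrArg (‖trace ·‖) (Matrix.map_pow M Complex.ofRealHom k)
    _ ≤ Fintype.card n := norm_trace_pow_le_card hspec hk

theorem smul_pow_le_pow_mulVec [DecidableEq n] (hM : ∀ i j, 0 ≤ M i j) {r : ℝ} (hr : 0 ≤ r)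
    {u : n → ℝ} (hu : r • u ≤ M *ᵥ u) (k : ℕ) : r ^ k • u ≤ (M ^ k) *ᵥ u := by
  induction k with
  | zero => simp
  | succ k ih =>
    calc r ^ (k + 1) • u = r ^ k • (r • u) := by rw [pow_succ, mul_smul]
      _ ≤ r ^ k • (M *ᵥ u) := smul_le_smul_of_nonneg_left hu (pow_nonneg hr k)
      _ = M *ᵥ (r ^ k • u) := (mulVec_smul M _ u).symm
      _ ≤ M *ᵥ ((M ^ k) *ᵥ u) := mulVec_mono hM ih
      _ = (M ^ (k + 1)) *ᵥ u := by rw [mulVec_mulVec, pow_succ']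

theorem not_exists_forall_pow_apply_le [DecidableEq n] [Nonempty n] (hM : ∀ i j, 0 ≤ M i j)
    {u : n → ℝ} (hu : ∀ i, 0 < u i) (hlt : ∀ i, u i < (M *ᵥ u) i) :
    ¬∃ C, ∀ k i j, (M ^ k) i j ≤ C := by
  rintro ⟨C, hC⟩
  obtain ⟨i₀, hi₀⟩ := Finite.exists_min fun i => (M *ᵥ u) i / u i
  set r := (M *ᵥ u) i₀ / u i₀
  have hr : 1 < r := (one_lt_div (hu i₀)).mpr (hlt i₀)
  have hru : r • u ≤ M *ᵥ u := fun i => (le_div_iff₀ (hu i)).mp (hi₀ i)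
  obtain ⟨k, hk⟩ := pow_unbounded_of_one_lt (C * (∑ j, u j) / u i₀) hr
  have hbound : ((M ^ k) *ᵥ u) i₀ ≤ C * ∑ j, u j := by
    rw [Finset.mul_sum]
    exact Finset.sum_le_sum fun j _ => mul_le_mul_of_nonneg_right (hC k i₀ j) (hu j).le
  have hgrowth := smul_pow_le_pow_mulVec hM (by linarith) hru k i₀
  rw [div_lt_iff₀ (hu i₀)] at hk
  simp only [Pi.smul_apply, smul_eq_mul] at hgrowth
  linarith

end Nonneg

section Adjugate

variable {n K : Type*} [Fintype n] [DecidableEq n] [Field K] {A : Matrix n n K} {x y : n → K}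

theorem rank_vecMulVec_eq_one (hy : y ≠ 0) (hx : x ≠ 0) : (vecMulVec y x).rank = 1 := by
  obtain ⟨j, hj⟩ : ∃ j, x j ≠ 0 := Function.ne_iff.mp hx
  have hrange : LinearMap.range (vecMulVec y x).mulVecLin = Submodule.span K {y} := by
    refine le_antisymm ?_
      ((Submodule.span_singleton_le_iff_mem _ _).mpr ⟨(x j)⁻¹ • Pi.single j 1, ?_⟩)
    · rintro _ ⟨z, rfl⟩
      exact Submodule.mem_span_singleton.mpr ⟨x ⬝ᵥ z, by simp [vecMulVec_mulVec]⟩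
    · ext k
      simp [vecMulVec_apply, hj, mul_comm (y k)]
  rw [rank, hrange, finrank_span_singleton hy]

theorem adjugate_eq_smul_vecMulVec (hdet : A.det = 0) (hy : y ≠ 0)
    (hker : ∀ z, A *ᵥ z = 0 → ∃ t : K, z = t • y)
    (hker' : ∀ z, z ᵥ* A = 0 → ∃ t : K, z = t • x) :
    ∃ s : K, adjugate A = s • vecMulVec y x := by
  have hcol (j : n) : ∃ t : K, adjugate A *ᵥ Pi.single j 1 = t • y :=
    hker _ (by rw [mulVec_mulVec, mul_adjugate, hdet, zero_smul, zero_mulVec])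
  choose c hc using hcol
  have hadj : adjugate A = vecMulVec y c :=
    ext_of_mulVec_single fun j => by ext k; simp [hc, vecMulVec_apply, mul_comm]
  have hcA : c ᵥ* A = 0 := by
    have h := adjugate_mul A
    rw [hdet, zero_smul, hadj, vecMulVec_mul, vecMulVec_eq_zero] at h
    exact h.resolve_left hy
  obtain ⟨s, rfl⟩ := hker' c hcA
  exact ⟨s, by rw [hadj, vecMulVec_smul]⟩

theorem adjugate_apply_self_ne_zero (hker : ∀ z, A *ᵥ z = 0 → ∃ t : K, z = t • y)
    (hxA : x ᵥ* A = 0) {i : n} (hxi : x i ≠ 0) (hyi : y i ≠ 0) : adjugate A i i ≠ 0 := by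
  rw [adjugate_apply, Ne, ← exists_mulVec_eq_zero_iff]
  rintro ⟨z, hz0, hz⟩
  have hrow (k : n) : (A.updateRow i (Pi.single i 1) *ᵥ z) k = 0 := congrFun hz k
  have hzi : z i = 0 := by simpa [mulVec, updateRow_self] using hrow i
  have hAz_ne (k : n) (hk : k ≠ i) : (A *ᵥ z) k = 0 := by
    simpa [mulVec, updateRow_ne hk] using hrow k
  have hAz : A *ᵥ z = 0 := by
    have hdot : x ⬝ᵥ (A *ᵥ z) = x i * (A *ᵥ z) i := by
      rw [dotProduct, Finset.sum_eq_single i (fun k _ hk => by rw [hAz_ne k hk, mul_zero])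
        (by simp)]
    rw [dotProduct_mulVec, hxA, zero_dotProduct, eq_comm, mul_eq_zero] at hdot
    funext k
    by_cases hk : k = i
    · subst hk; exact hdot.resolve_left hxi
    · exact hAz_ne k hk
  obtain ⟨t, rfl⟩ := hker z hAz
  simp only [Pi.smul_apply, smul_eq_mul, mul_eq_zero, hyi, or_false] at hzi
  simp [hzi] at hz0

end Adjugate

section Irreducible

variable {n : Type*} [Fintype n] [DecidableEq n]

structure IsIrreducibleNonneg (M : Matrix n n ℝ) : Prop where
  nonneg : ∀ i j, 0 ≤ M i j
  exists_pow_pos : ∀ i j, ∃ k, 0 < k ∧ 0 < (M ^ k) i j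

namespace IsIrreducibleNonneg

variable {M : Matrix n n ℝ} (hM : M.IsIrreducibleNonneg)
include hM

theorem transpose : Mᵀ.IsIrreducibleNonneg where
  nonneg i j := hM.nonneg j i
  exists_pow_pos i j := by
    obtain ⟨k, hk, hpos⟩ := hM.exists_pow_pos j i
    exact ⟨k, hk, by rwa [← transpose_pow]⟩

theorem exists_forall_pow_apply_le
    (hspec : ∀ μ ∈ spectrum ℂ (M.map Complex.ofReal), ‖μ‖ ≤ 1) :
    ∃ C, ∀ k i j, (M ^ k) i j ≤ C := by
  choose m hm_pos hm using hM.exists_pow_pos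
  obtain ⟨C, hC⟩ := Finite.bddAbove_range fun p : n × n =>
    (Fintype.card n : ℝ) / (M ^ m p.2 p.1) p.2 p.1
  refine ⟨C, fun k i j => le_trans ?_ (hC ⟨(i, j), rfl⟩)⟩
  rw [le_div_iff₀ (hm j i)]
  calc (M ^ k) i j * (M ^ m j i) j i = (M ^ m j i) j i * (M ^ k) i j := mul_comm _ _
    _ ≤ (M ^ (m j i + k)) j j := by
        rw [pow_add, mul_apply]
        exact Finset.single_le_sum (f := fun l => (M ^ m j i) j l * (M ^ k) l j)
          (fun l _ => mul_nonneg (pow_apply_nonneg hM.nonneg _ j l)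
            (pow_apply_nonneg hM.nonneg _ l j)) (Finset.mem_univ i)
    _ ≤ Fintype.card n :=
        pow_apply_self_le_card hM.nonneg hspec (Nat.add_pos_left (hm_pos j i) k) j

theorem pos_of_mulVec_eq_self {w : n → ℝ} (hw0 : 0 ≤ w) (hw : w ≠ 0) (hfix : M *ᵥ w = w)
    (i : n) : 0 < w i := by
  obtain ⟨j, hj⟩ : ∃ j, 0 < w j := by
    by_contra! h
    exact hw (le_antisymm h hw0)
  have hfix_pow (k : ℕ) : (M ^ k) *ᵥ w = w := by
    induction k with
    | zero => simp
    | succ k ih => rw [pow_succ', ← mulVec_mulVec, ih, hfix]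
  obtain ⟨k, -, hk⟩ := hM.exists_pow_pos i j
  rw [← hfix_pow k]
  exact mulVec_apply_pos (pow_apply_nonneg hM.nonneg k) hw0 hk hj

theorem eq_smul_of_mulVec_eq_self {y : n → ℝ} (hy_pos : ∀ i, 0 < y i) (hy : M *ᵥ y = y)
    {z : n → ℝ} (hz : M *ᵥ z = z) : ∃ t : ℝ, z = t • y := by
  cases isEmpty_or_nonempty n
  · exact ⟨0, Subsingleton.elim _ _⟩
  -- subtracting the largest multiple of `y` lying below `z` leaves a nonnegative fixed vector
  -- with a zero coordinate, which must vanish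
  obtain ⟨i₀, hi₀⟩ := Finite.exists_min fun i => z i / y i
  refine ⟨z i₀ / y i₀, sub_eq_zero.mp (by_contra fun hne => ?_)⟩
  have hnonneg : 0 ≤ z - (z i₀ / y i₀) • y := fun i => by
    have := (div_le_div_iff₀ (hy_pos i₀) (hy_pos i)).mp (hi₀ i)
    simp only [Pi.zero_apply, Pi.sub_apply, Pi.smul_apply, smul_eq_mul, sub_nonneg,
      div_mul_eq_mul_div, div_le_iff₀ (hy_pos i₀)]
    linarith
  have hfix : M *ᵥ (z - (z i₀ / y i₀) • y) = z - (z i₀ / y i₀) • y := by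
    rw [mulVec_sub, mulVec_smul, hz, hy]
  have := hM.pos_of_mulVec_eq_self hnonneg hne hfix i₀
  simp [div_mul_cancel₀ _ (hy_pos i₀).ne'] at this

theorem exists_commute_forall_pos :
    ∃ S : Matrix n n ℝ, Commute M S ∧ ∀ i j, 0 < S i j := by
  choose m _ hm using hM.exists_pow_pos
  let N := Finset.univ.sup fun p : n × n => m p.1 p.2
  refine ⟨∑ k ∈ Finset.range (N + 1), M ^ k,
    Commute.sum_right _ _ _ fun k _ => Commute.self_pow M k, fun i j => ?_⟩
  rw [sum_apply]
  refine Finset.sum_pos' (fun k _ => pow_apply_nonneg hM.nonneg k i j) ⟨m i j, ?_, hm i j⟩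
  exact Finset.mem_range_succ_iff.mpr
    (Finset.le_sup (f := fun p : n × n => m p.1 p.2) (Finset.mem_univ (i, j)))

theorem mulVec_eq_self_of_le_mulVec (hbdd : ∃ C, ∀ k i j, (M ^ k) i j ≤ C) {w : n → ℝ}
    (hw0 : 0 ≤ w) (hw : w ≠ 0) (hle : w ≤ M *ᵥ w) : M *ᵥ w = w := by
  obtain ⟨j, hj⟩ : ∃ j, 0 < w j := by
    by_contra! h
    exact hw (le_antisymm h hw0)
  have : Nonempty n := ⟨j⟩
  by_contra hne
  obtain ⟨i₀, hi₀⟩ : ∃ i, w i < (M *ᵥ w) i := by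
    by_contra! h
    exact hne (le_antisymm h hle)
  -- smoothing by a positive matrix commuting with `M` makes the excess `M w - w` positive
  obtain ⟨S, hSM, hS⟩ := hM.exists_commute_forall_pos
  have hS0 : ∀ i j, 0 ≤ S i j := fun i j => (hS i j).le
  refine not_exists_forall_pow_apply_le hM.nonneg (u := S *ᵥ w)
    (fun i => mulVec_apply_pos hS0 hw0 (hS i j) hj) (fun i => ?_) hbdd
  have hpos := mulVec_apply_pos hS0 (sub_nonneg.mpr hle) (hS i i₀) (sub_pos.mpr hi₀)
  rwa [mulVec_sub, mulVec_mulVec, ← hSM.eq, ← mulVec_mulVec, Pi.sub_apply, sub_pos] at hpos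

theorem exists_pos_mulVec_eq_self (hspec : ∀ μ ∈ spectrum ℂ (M.map Complex.ofReal), ‖μ‖ ≤ 1)
    {μ : ℂ} (hμ : μ ∈ spectrum ℂ (M.map Complex.ofReal)) (hμ_norm : ‖μ‖ = 1) :
    ∃ y : n → ℝ, (∀ i, 0 < y i) ∧ M *ᵥ y = y := by
  obtain ⟨w, hw0, hw, hle⟩ := exists_nonneg_smul_le_mulVec hM.nonneg hμ
  rw [hμ_norm, one_smul] at hle
  have hfix := hM.mulVec_eq_self_of_le_mulVec (hM.exists_forall_pow_apply_le hspec) hw0 hw hle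
  exact ⟨w, hM.pos_of_mulVec_eq_self hw0 hw hfix, hfix⟩

theorem adjugate_sub_one_eq_smul_vecMulVec [Nonempty n] {x y : n → ℝ} (hx_pos : ∀ i, 0 < x i)
    (hx : x ᵥ* M = x) (hy_pos : ∀ i, 0 < y i) (hy : M *ᵥ y = y) :
    ∃ s : ℝ, s ≠ 0 ∧ adjugate (M - 1) = s • vecMulVec y x := by
  obtain ⟨i⟩ := ‹Nonempty n›
  have hy0 : y ≠ 0 := fun h => (hy_pos i).ne' (congrFun h i)
  have hker (z : n → ℝ) (hz : (M - 1) *ᵥ z = 0) : ∃ t : ℝ, z = t • y :=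
    hM.eq_smul_of_mulVec_eq_self hy_pos hy (by rwa [sub_mulVec, one_mulVec, sub_eq_zero] at hz)
  have hker' (z : n → ℝ) (hz : z ᵥ* (M - 1) = 0) : ∃ t : ℝ, z = t • x :=
    hM.transpose.eq_smul_of_mulVec_eq_self hx_pos (by rwa [mulVec_transpose])
      (by rwa [vecMul_sub, vecMul_one, sub_eq_zero, ← mulVec_transpose] at hz)
  have hxA : x ᵥ* (M - 1) = 0 := by rw [vecMul_sub, vecMul_one, hx, sub_self]
  have hdet : (M - 1).det = 0 :=
    exists_mulVec_eq_zero_iff.mp ⟨y, hy0, by rw [sub_mulVec, one_mulVec, hy, sub_self]⟩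
  obtain ⟨s, hs⟩ := adjugate_eq_smul_vecMulVec hdet hy0 hker hker'
  refine ⟨s, ?_, hs⟩
  rintro rfl
  exact adjugate_apply_self_ne_zero hker hxA (hx_pos i).ne' (hy_pos i).ne' (by simp [hs])

end IsIrreducibleNonneg

end Irreducible

end Matrix

section SpectralRadius

variable {K : ℕ} {M : Matrix (Fin K) (Fin K) ℝ}

theorem norm_le_matrixSpectralRadius {μ : ℂ} (hμ : μ ∈ spectrum ℂ (M.map Complex.ofReal)) :
    ‖μ‖ ≤ matrixSpectralRadius M :=
  le_csSup (((M.map Complex.ofReal).finite_spectrum.image _).bddAbove) ⟨μ, hμ, rfl⟩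

theorem exists_norm_eq_matrixSpectralRadius (hρ : matrixSpectralRadius M ≠ 0) :
    ∃ μ ∈ spectrum ℂ (M.map Complex.ofReal), ‖μ‖ = matrixSpectralRadius M := by
  have hne : ((‖·‖) '' spectrum ℂ (M.map Complex.ofReal)).Nonempty := by
    by_contra h
    rw [Set.not_nonempty_iff_eq_empty] at h
    exact hρ (by rw [matrixSpectralRadius, h, Real.sSup_empty])
  exact hne.csSup_mem ((M.map Complex.ofReal).finite_spectrum.image _)

theorem matrixSpectralRadius_transpose : matrixSpectralRadius Mᵀ = matrixSpectralRadius M := by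
  rw [matrixSpectralRadius, transpose_map, spectrum_transpose, matrixSpectralRadius]

theorem Matrix.IsIrreducibleNonneg.exists_pos_mulVec_eq_self_of_matrixSpectralRadius_eq_one
    (hM : M.IsIrreducibleNonneg) (hrad : matrixSpectralRadius M = 1) :
    ∃ y : Fin K → ℝ, (∀ i, 0 < y i) ∧ M *ᵥ y = y := by
  obtain ⟨μ, hμ, hμ_norm⟩ := exists_norm_eq_matrixSpectralRadius (hrad ▸ one_ne_zero)
  exact hM.exists_pos_mulVec_eq_self (fun ν hν => hrad ▸ norm_le_matrixSpectralRadius hν) hμ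
    (hμ_norm.trans hrad)

end SpectralRadius

/-- for an irreducible nonnegative `K×K` matrix `M` with spectral
radius 1, the cofactor matrix of `M − I` has rank 1 and its transpose (the
adjugate of `M − I`) equals `λ · Y Xᵀ` for some nonzero `λ`, where `X` is a
positive left 1-eigenvector and `Y` a positive right 1-eigenvector of `M`. -/
theorem cofactor_of_critical_matrix_rank_one
    (K : ℕ) (M : Matrix (Fin K) (Fin K) ℝ)
    (hnonneg : ∀ i j, 0 ≤ M i j)
    (hirr : ∀ i j, ∃ m : ℕ, 0 < m ∧ 0 < (M ^ m) i j)
    (hrad : matrixSpectralRadius M = 1) :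
    ∃ (lam : ℝ) (X Y : Fin K → ℝ),
      lam ≠ 0 ∧
      (∀ i, 0 < X i) ∧ (∀ i, 0 < Y i) ∧
      Matrix.vecMul X M = X ∧ M.mulVec Y = Y ∧
      Matrix.adjugate (M - 1) = lam • Matrix.vecMulVec Y X ∧
      (Matrix.adjugate (M - 1)).rank = 1 := by
  have hM : M.IsIrreducibleNonneg := ⟨hnonneg, hirr⟩
  obtain ⟨Y, hY_pos, hY⟩ := hM.exists_pos_mulVec_eq_self_of_matrixSpectralRadius_eq_one hrad
  obtain ⟨X, hX_pos, hX⟩ := hM.transpose.exists_pos_mulVec_eq_self_of_matrixSpectralRadius_eq_one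
    (by rwa [matrixSpectralRadius_transpose])
  rw [mulVec_transpose] at hX
  have hK : Nonempty (Fin K) := Fin.pos_iff_nonempty.mp <| Nat.pos_of_ne_zero <| by
    rintro rfl
    simp [matrixSpectralRadius, spectrum.of_subsingleton] at hrad
  obtain ⟨s, hs0, hs⟩ := hM.adjugate_sub_one_eq_smul_vecMulVec hX_pos hX hY_pos hY
  obtain ⟨i⟩ := hK
  refine ⟨s, X, Y, hs0, hX_pos, hY_pos, hX, hY, hs, ?_⟩
  rw [hs, ← smul_vecMulVec]
  exact rank_vecMulVec_eq_one (smul_ne_zero hs0 fun h => (hY_pos i).ne' (congrFun h i))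
    fun h => (hX_pos i).ne' (congrFun h i)
end

section
/- Fix N ≥ 3 and let δ ∈ (0,1) be a solution of δ = ((1+δ)/2)^N. For any subset I ⊆ [2N] with |I| = N, define θ ∈ ℝ^{2N} by e^{θᵢ} = 1 + √((1−δ)/2) for i ∈ I and e^{θᵢ} = 1 − √((1−δ)/2) otherwise. Then e^{Σ_k θ_k} = δ and for every i ∈ [2N], (1 + e^{Σ_k θ_k} + 2e^{2θᵢ})/4 = e^{θᵢ}; consequently, for the 2N-type family with generating functions φ^(i)(e^θ) = (1 + e^{Σ_k θ_k} + 2e^{2θᵢ})/4, one has χ(θ) = 0. Hence 0 has at least C(2N, N) distinct preimages under χ. -/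
open scoped BigOperators

/-- for the `2N`-type family with generating functions
`φ⁽ⁱ⁾(e^θ) = (1 + e^{Σθ_k} + 2e^{2θᵢ})/4`, given `N ≥ 3` and a solution
`δ ∈ (0,1)` of `δ = ((1+δ)/2)^N`, every subset `I ⊆ [2N]` with `|I| = N`
gives a parameter `θ` (with `e^{θᵢ} = 1 ± √((1−δ)/2)`) satisfying
`e^{Σθ} = δ`, `(1 + e^{Σθ} + 2e^{2θᵢ})/4 = e^{θᵢ}` and `χ(θ) = 0`; hence `0`
has at least `C(2N,N)` preimages under `χ`. -/
theorem chi_has_many_preimages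
    (N : ℕ) (hN : 3 ≤ N)
    (δ : ℝ) (hδ0 : 0 < δ) (hδ1 : δ < 1) (hδ : δ = ((1 + δ) / 2) ^ N)
    (χ : (Fin (2 * N) → ℝ) → Fin (2 * N) → ℝ)
    (hχ : ∀ t i, χ t i =
      Real.log ((1 + Real.exp (∑ k, t k) + 2 * Real.exp (2 * t i)) / 4) - t i) :
    (∀ I : Finset (Fin (2 * N)), I.card = N →
      ∀ θ : Fin (2 * N) → ℝ,
        (∀ i, θ i = Real.log
          (if i ∈ I then 1 + Real.sqrt ((1 - δ) / 2)
            else 1 - Real.sqrt ((1 - δ) / 2))) →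
        Real.exp (∑ k, θ k) = δ ∧
        (∀ i, (1 + Real.exp (∑ k, θ k) + 2 * Real.exp (2 * θ i)) / 4
            = Real.exp (θ i)) ∧
        (∀ i, χ θ i = 0)) ∧
      ∃ S : Finset ((Fin (2 * N)) → ℝ),
        (2 * N).choose N ≤ S.card ∧ ∀ θ ∈ S, ∀ i, χ θ i = 0 := by
  set s := Real.sqrt ((1 - δ) / 2) with hs
  have hhalf : (0:ℝ) < (1 - δ) / 2 := by linarith
  have hs2 : s ^ 2 = (1 - δ) / 2 := Real.sq_sqrt hhalf.le
  have hs0 : 0 < s := Real.sqrt_pos.mpr hhalf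
  have hs1 : s < 1 := by nlinarith
  have main : ∀ I : Finset (Fin (2 * N)), I.card = N →
      ∀ θ : Fin (2 * N) → ℝ,
        (∀ i, θ i = Real.log (if i ∈ I then 1 + s else 1 - s)) →
        Real.exp (∑ k, θ k) = δ ∧
        (∀ i, (1 + Real.exp (∑ k, θ k) + 2 * Real.exp (2 * θ i)) / 4
            = Real.exp (θ i)) ∧
        (∀ i, χ θ i = 0) := by
    intro I hI θ hθ
    have hpos : ∀ i, (0:ℝ) < (if i ∈ I then 1 + s else 1 - s) := by
      intro i; split <;> linarith
    have hexp : ∀ i, Real.exp (θ i) = (if i ∈ I then 1 + s else 1 - s) := by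
      intro i; rw [hθ i, Real.exp_log (hpos i)]
    have hcardc : (Finset.univ \ I).card = N := by
      rw [Finset.card_sdiff_of_subset (Finset.subset_univ I), Finset.card_univ,
        Fintype.card_fin, hI]
      omega
    have hsum : Real.exp (∑ k, θ k) = δ := by
      rw [Real.exp_sum]
      have hprod : ∏ k, Real.exp (θ k) = (1 + s) ^ N * (1 - s) ^ N := by
        rw [← Finset.prod_sdiff (Finset.subset_univ I)]
        have h1 : ∏ k ∈ Finset.univ \ I, Real.exp (θ k) = (1 - s) ^ N := by
          rw [Finset.prod_congr rfl (fun k hk => by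
            rw [hexp k, if_neg (Finset.mem_sdiff.mp hk).2])]
          rw [Finset.prod_const, hcardc]
        have h2 : ∏ k ∈ I, Real.exp (θ k) = (1 + s) ^ N := by
          rw [Finset.prod_congr rfl (fun k hk => by rw [hexp k, if_pos hk])]
          rw [Finset.prod_const, hI]
        rw [h1, h2]; ring
      rw [hprod, ← mul_pow]
      have h3 : (1 + s) * (1 - s) = (1 + δ) / 2 := by nlinarith
      rw [h3, ← hδ]
    have hfix : ∀ i, (1 + Real.exp (∑ k, θ k) + 2 * Real.exp (2 * θ i)) / 4
        = Real.exp (θ i) := by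
      intro i
      have h2m : Real.exp (2 * θ i) = Real.exp (θ i) ^ 2 := by
        rw [two_mul, Real.exp_add]; ring
      rw [hsum, h2m, hexp i]
      by_cases hi : i ∈ I <;> simp only [hi, if_true, if_false] <;> nlinarith
    refine ⟨hsum, hfix, fun i => ?_⟩
    rw [hχ θ i, hfix i, Real.log_exp, sub_self]
  refine ⟨fun I hI θ hθ => main I hI θ hθ, ?_⟩
  set f : Finset (Fin (2 * N)) → (Fin (2 * N) → ℝ) :=
    fun I i => Real.log (if i ∈ I then 1 + s else 1 - s) with hf
  refine ⟨(Finset.powersetCard N (Finset.univ : Finset (Fin (2 * N)))).image f,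
    ?_, ?_⟩
  · rw [Finset.card_image_of_injOn, Finset.card_powersetCard, Finset.card_univ,
      Fintype.card_fin]
    intro I _ J _ hIJ
    ext i
    have h := congrFun hIJ i
    simp only [hf] at h
    have hne : (1 : ℝ) + s ≠ 1 - s := by intro h'; linarith
    constructor
    · intro hiI
      by_contra hiJ
      rw [if_pos hiI, if_neg hiJ] at h
      exact hne (by
        have := congrArg Real.exp h
        rwa [Real.exp_log (by linarith), Real.exp_log (by linarith)] at this)
    · intro hiJ
      by_contra hiI
      rw [if_neg hiI, if_pos hiJ] at h
      exact hne (by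
        have := congrArg Real.exp h.symm
        rwa [Real.exp_log (by linarith), Real.exp_log (by linarith)] at this)
  · intro θ hθ i
    obtain ⟨I, hImem, hIθ⟩ := Finset.mem_image.mp hθ
    have hIcard : I.card = N := (Finset.mem_powersetCard.mp hImem).2
    exact (main I hIcard θ (fun j => by rw [← hIθ])).2.2 i
end
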